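/- BC(one-variable HyperLTL) ≤ left-dc-TeamLTL(∼): every sentence of the Boolean closure of one-variable HyperLTL, given in disjunctive normal form ⋁ᵢ ⋀ⱼ Q_{i,j}π.φ_{i,j}(π) with Q_{i,j} ∈ {∀,∃} and φ_{i,j} quantifier-free, is equivalent to the team formula ⊕ᵢ (αᵢ ∧ ⋀ⱼ ∃φ_{i,j}), where αᵢ is the conjunction of the universally quantified matrices in disjunct i and the ∃-conjuncts correspond to the existentially quantified ones; i.e., for all teams T, ∅ ⊨_T ⋁ᵢ ⋀ⱼ Q_{i,j}π.φ_{i,j}(π) iff T ⊨ ⊕ᵢ (αᵢ ∧ ⋀ⱼ ∃φ_{i,j}). -/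
import Mathlib


/-- A trace over `AP`: an infinite sequence of sets of atomic propositions. -/
def Trace (AP : Type) := ℕ → Set AP

/-- The suffix `t[i,∞]` of a trace. -/
def Trace.shift {AP : Type} (t : Trace AP) (i : ℕ) : Trace AP := fun n => t (n + i)

/-- `T[f,∞] = {t[s,∞] | t ∈ T, s ∈ f(t)}`. -/
def teamShift {AP : Type} (T : Set (Trace AP)) (f : Trace AP → Set ℕ) : Set (Trace AP) :=
  {s | ∃ t ∈ T, ∃ i ∈ f t, s = t.shift i}

/-- `f : T → 𝒫(ℕ)⁺`: assigns a nonempty set of time steps to every trace of the team. -/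
def goodF {AP : Type} (T : Set (Trace AP)) (f : Trace AP → Set ℕ) : Prop :=
  ∀ t ∈ T, (f t).Nonempty

/-- The ordering `f' < f` on choice functions (on the domain `T'`). -/
def fLT {AP : Type} (T' : Set (Trace AP)) (f' f : Trace AP → Set ℕ) : Prop :=
  ∀ t ∈ T', sInf (f' t) ≤ sInf (f t) ∧
    ∀ m, IsGreatest (f t) m → ∃ m', IsGreatest (f' t) m' ∧ m' < m

/-- Formulas of (NNF) LTL, extended with the Boolean disjunction `boolOr` (⊕)
and the Boolean negation `bNeg` (∼). -/
inductive TForm (AP : Type) where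
  | pos : AP → TForm AP
  | neg : AP → TForm AP
  | and : TForm AP → TForm AP → TForm AP
  | or : TForm AP → TForm AP → TForm AP
  | boolOr : TForm AP → TForm AP → TForm AP
  | bNeg : TForm AP → TForm AP
  | next : TForm AP → TForm AP
  | glob : TForm AP → TForm AP
  | untl : TForm AP → TForm AP → TForm AP

/-- Plain LTL formulas (negation normal form; no ⊕, no ∼). -/
def TForm.isLTL {AP : Type} : TForm AP → Prop
  | .pos _ => True
  | .neg _ => True
  | .and φ ψ => φ.isLTL ∧ ψ.isLTL
  | .or φ ψ => φ.isLTL ∧ ψ.isLTL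
  | .boolOr _ _ => False
  | .bNeg _ => False
  | .next φ => φ.isLTL
  | .glob φ => φ.isLTL
  | .untl φ ψ => φ.isLTL ∧ ψ.isLTL

/-- TeamLTL(⊕) formulas: no Boolean negation. -/
def TForm.noBNeg {AP : Type} : TForm AP → Prop
  | .pos _ => True
  | .neg _ => True
  | .and φ ψ => φ.noBNeg ∧ ψ.noBNeg
  | .or φ ψ => φ.noBNeg ∧ ψ.noBNeg
  | .boolOr φ ψ => φ.noBNeg ∧ ψ.noBNeg
  | .bNeg _ => False
  | .next φ => φ.noBNeg
  | .glob φ => φ.noBNeg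
  | .untl φ ψ => φ.noBNeg ∧ ψ.noBNeg

/-- Ordinary single-trace LTL satisfaction (⊕ read as ∨ and ∼ as ¬). -/
def TForm.sat {AP : Type} : Trace AP → TForm AP → Prop
  | t, .pos p => p ∈ t 0
  | t, .neg p => p ∉ t 0
  | t, .and φ ψ => TForm.sat t φ ∧ TForm.sat t ψ
  | t, .or φ ψ => TForm.sat t φ ∨ TForm.sat t ψ
  | t, .boolOr φ ψ => TForm.sat t φ ∨ TForm.sat t ψ
  | t, .bNeg φ => ¬ TForm.sat t φ
  | t, .next φ => TForm.sat (t.shift 1) φ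
  | t, .glob φ => ∀ i, TForm.sat (t.shift i) φ
  | t, .untl φ ψ => ∃ i, TForm.sat (t.shift i) ψ ∧ ∀ j < i, TForm.sat (t.shift j) φ

/-- Lax team semantics of TeamLTL(⊕,∼). -/
def TForm.teamSat {AP : Type} : Set (Trace AP) → TForm AP → Prop
  | T, .pos p => ∀ t ∈ T, p ∈ t 0
  | T, .neg p => ∀ t ∈ T, p ∉ t 0
  | T, .and φ ψ => TForm.teamSat T φ ∧ TForm.teamSat T ψ
  | T, .or φ ψ => ∃ T₁ T₂, T₁ ∪ T₂ = T ∧ TForm.teamSat T₁ φ ∧ TForm.teamSat T₂ ψ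
  | T, .boolOr φ ψ => TForm.teamSat T φ ∨ TForm.teamSat T ψ
  | T, .bNeg φ => ¬ TForm.teamSat T φ
  | T, .next φ => TForm.teamSat (teamShift T (fun _ => {1})) φ
  | T, .glob φ => ∀ f, goodF T f → TForm.teamSat (teamShift T f) φ
  | T, .untl φ ψ => ∃ f, goodF T f ∧ TForm.teamSat (teamShift T f) ψ ∧
      ∀ f', goodF {t ∈ T | ¬ IsGreatest (f t) 0} f' →
        fLT {t ∈ T | ¬ IsGreatest (f t) 0} f' f →
        ({t ∈ T | ¬ IsGreatest (f t) 0} = (∅ : Set (Trace AP)) ∨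
          TForm.teamSat (teamShift {t ∈ T | ¬ IsGreatest (f t) 0} f') φ)

/-- HyperLTL formulas (quantifiers may occur anywhere). -/
inductive HForm (AP V : Type) where
  | atom : AP → V → HForm AP V
  | hnot : HForm AP V → HForm AP V
  | hand : HForm AP V → HForm AP V → HForm AP V
  | hor : HForm AP V → HForm AP V → HForm AP V
  | hnext : HForm AP V → HForm AP V
  | hglob : HForm AP V → HForm AP V
  | huntl : HForm AP V → HForm AP V → HForm AP V
  | hall : V → HForm AP V → HForm AP V
  | hex : V → HForm AP V → HForm AP V

/-- Shift a trace assignment: `Π[i,∞]`. -/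
def shiftA {AP V : Type} (A : V → Trace AP) (i : ℕ) : V → Trace AP := fun v => (A v).shift i

/-- HyperLTL satisfaction `Π ⊨_T φ`. -/
def HForm.hsat {AP V : Type} [DecidableEq V] :
    (V → Trace AP) → Set (Trace AP) → HForm AP V → Prop
  | A, _, .atom a v => a ∈ A v 0
  | A, T, .hnot φ => ¬ HForm.hsat A T φ
  | A, T, .hand φ ψ => HForm.hsat A T φ ∧ HForm.hsat A T ψ
  | A, T, .hor φ ψ => HForm.hsat A T φ ∨ HForm.hsat A T ψ
  | A, T, .hnext φ => HForm.hsat (shiftA A 1) T φ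
  | A, T, .hglob φ => ∀ i, HForm.hsat (shiftA A i) T φ
  | A, T, .huntl φ ψ => ∃ i, HForm.hsat (shiftA A i) T ψ ∧
      ∀ j < i, HForm.hsat (shiftA A j) T φ
  | A, T, .hall v φ => ∀ t ∈ T, HForm.hsat (Function.update A v t) T φ
  | A, T, .hex v φ => ∃ t ∈ T, HForm.hsat (Function.update A v t) T φ

/-- Quantifier-free HyperLTL formulas. -/
def HForm.QFree {AP V : Type} : HForm AP V → Prop
  | .atom _ _ => True
  | .hnot φ => φ.QFree
  | .hand φ ψ => φ.QFree ∧ ψ.QFree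
  | .hor φ ψ => φ.QFree ∧ ψ.QFree
  | .hnext φ => φ.QFree
  | .hglob φ => φ.QFree
  | .huntl φ ψ => φ.QFree ∧ ψ.QFree
  | .hall _ _ => False
  | .hex _ _ => False

/-- All trace variables occurring in a HyperLTL formula. -/
def HForm.vars {AP V : Type} : HForm AP V → Set V
  | .atom _ v => {v}
  | .hnot φ => φ.vars
  | .hand φ ψ => φ.vars ∪ ψ.vars
  | .hor φ ψ => φ.vars ∪ ψ.vars
  | .hnext φ => φ.vars
  | .hglob φ => φ.vars
  | .huntl φ ψ => φ.vars ∪ ψ.vars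
  | .hall v φ => insert v φ.vars
  | .hex v φ => insert v φ.vars

/-- Free trace variables of a HyperLTL formula. -/
def HForm.free {AP V : Type} : HForm AP V → Set V
  | .atom _ v => {v}
  | .hnot φ => φ.free
  | .hand φ ψ => φ.free ∪ ψ.free
  | .hor φ ψ => φ.free ∪ ψ.free
  | .hnext φ => φ.free
  | .hglob φ => φ.free
  | .huntl φ ψ => φ.free ∪ ψ.free
  | .hall v φ => φ.free \ {v}
  | .hex v φ => φ.free \ {v}

/-- Rename the trace variables of a HyperLTL formula. -/
def HForm.rename {AP V : Type} (ρ : V → V) : HForm AP V → HForm AP V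
  | .atom a v => .atom a (ρ v)
  | .hnot φ => .hnot (φ.rename ρ)
  | .hand φ ψ => .hand (φ.rename ρ) (ψ.rename ρ)
  | .hor φ ψ => .hor (φ.rename ρ) (ψ.rename ρ)
  | .hnext φ => .hnext (φ.rename ρ)
  | .hglob φ => .hglob (φ.rename ρ)
  | .huntl φ ψ => .huntl (φ.rename ρ) (ψ.rename ρ)
  | .hall v φ => .hall (ρ v) (φ.rename ρ)
  | .hex v φ => .hex (ρ v) (φ.rename ρ)

/-- Hyperification `φ ↦ φ(π)`: replace each proposition `p` by `p_π`. -/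
def TForm.hyperify {AP V : Type} (π : V) : TForm AP → HForm AP V
  | .pos p => .atom p π
  | .neg p => .hnot (.atom p π)
  | .and φ ψ => .hand (φ.hyperify π) (ψ.hyperify π)
  | .or φ ψ => .hor (φ.hyperify π) (ψ.hyperify π)
  | .boolOr φ ψ => .hor (φ.hyperify π) (ψ.hyperify π)
  | .bNeg φ => .hnot (φ.hyperify π)
  | .next φ => .hnext (φ.hyperify π)
  | .glob φ => .hglob (φ.hyperify π)
  | .untl φ ψ => .huntl (φ.hyperify π) (ψ.hyperify π)

/-- A tautological NNF LTL formula. -/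
def TForm.verum {AP : Type} [Inhabited AP] : TForm AP := .or (.pos default) (.neg default)

/-- Negation normal form of the (classical) negation of an NNF LTL formula. -/
def TForm.dual {AP : Type} [Inhabited AP] : TForm AP → TForm AP
  | .pos p => .neg p
  | .neg p => .pos p
  | .and φ ψ => .or φ.dual ψ.dual
  | .or φ ψ => .and φ.dual ψ.dual
  | .boolOr φ ψ => .and φ.dual ψ.dual
  | .bNeg φ => φ
  | .next φ => .next φ.dual
  | .glob φ => .untl TForm.verum φ.dual
  | .untl φ ψ => .or (.glob ψ.dual) (.untl ψ.dual (.and φ.dual ψ.dual))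

/-- The shorthand `∃β := ∼β^d`. -/
def TForm.tExists {AP : Type} [Inhabited AP] (β : TForm AP) : TForm AP := .bNeg β.dual

mutual
/-- Erase trace-variable subscripts: turn a quantifier-free HyperLTL formula into
an (NNF) LTL formula, pushing classical negations inward. -/
def deH {AP V : Type} [Inhabited AP] : HForm AP V → TForm AP
  | .atom a _ => .pos a
  | .hnot φ => deHn φ
  | .hand φ ψ => .and (deH φ) (deH ψ)
  | .hor φ ψ => .or (deH φ) (deH ψ)
  | .hnext φ => .next (deH φ)
  | .hglob φ => .glob (deH φ)
  | .huntl φ ψ => .untl (deH φ) (deH ψ)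
  | .hall _ φ => deH φ
  | .hex _ φ => deH φ

/-- NNF of the negation of an erased quantifier-free HyperLTL formula. -/
def deHn {AP V : Type} [Inhabited AP] : HForm AP V → TForm AP
  | .atom a _ => .neg a
  | .hnot φ => deH φ
  | .hand φ ψ => .or (deHn φ) (deHn ψ)
  | .hor φ ψ => .and (deHn φ) (deHn ψ)
  | .hnext φ => .next (deHn φ)
  | .hglob φ => .untl TForm.verum (deHn φ)
  | .huntl φ ψ => .or (.glob (deHn ψ)) (.untl (deHn ψ) (.and (deHn φ) (deHn ψ)))
  | .hall _ φ => deHn φ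
  | .hex _ φ => deHn φ
end

/-- `φ₀ ∨ φ₁ ∨ ⋯ ∨ φₘ` for a nonempty family of HyperLTL formulas. -/
def HForm.bigOrF {AP V : Type} {m : ℕ} (f : Fin (m + 1) → HForm AP V) : HForm AP V :=
  (List.ofFn fun i : Fin m => f i.succ).foldr .hor (f 0)

/-- `φ₀ ∧ φ₁ ∧ ⋯ ∧ φₘ` for a nonempty family of HyperLTL formulas. -/
def HForm.bigAndF {AP V : Type} {m : ℕ} (f : Fin (m + 1) → HForm AP V) : HForm AP V :=
  (List.ofFn fun i : Fin m => f i.succ).foldr .hand (f 0)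

/-- `φ₀ ⊕ φ₁ ⊕ ⋯ ⊕ φₘ` for a nonempty family of team formulas. -/
def TForm.bigBoolOrF {AP : Type} {m : ℕ} (f : Fin (m + 1) → TForm AP) : TForm AP :=
  (List.ofFn fun i : Fin m => f i.succ).foldr .boolOr (f 0)

/-- `φ₀ ∧ φ₁ ∧ ⋯ ∧ φₘ` for a nonempty family of team formulas. -/
def TForm.bigAndF {AP : Type} {m : ℕ} (f : Fin (m + 1) → TForm AP) : TForm AP :=
  (List.ofFn fun i : Fin m => f i.succ).foldr .and (f 0)

/-- Apply a quantifier block (`true` = ∀, `false` = ∃). -/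
def applyBlock {AP V : Type} (qs : List (Bool × V)) (φ : HForm AP V) : HForm AP V :=
  qs.foldr (fun q acc => if q.1 then .hall q.2 acc else .hex q.2 acc) φ

/-- The dual of a quantifier block. -/
def dualBlock {V : Type} (qs : List (Bool × V)) : List (Bool × V) :=
  qs.map fun q => (!q.1, q.2)


section Aux

open Classical

variable {AP V : Type}

/-- The classical "release" dual of until. -/
theorem release_iff {A B : ℕ → Prop} :
    (¬ ∃ i, B i ∧ ∀ j < i, A j) ↔
      (∀ i, ¬ B i) ∨ (∃ i, (¬ A i ∧ ¬ B i) ∧ ∀ j < i, ¬ B j) := by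
  classical
  constructor
  · intro h
    by_cases hB : ∀ i, ¬ B i
    · exact Or.inl hB
    · right
      push_neg at hB
      have hBi0 : B (Nat.find hB) := Nat.find_spec hB
      have hpre : ∀ j < Nat.find hB, ¬ B j := fun j hj => Nat.find_min hB hj
      have hA : ∃ j, ¬ A j ∧ j < Nat.find hB := by
        by_contra hA
        push_neg at hA
        exact h ⟨Nat.find hB, hBi0, fun j hj => by
          by_contra hc; exact absurd hj (not_lt.2 (hA j hc))⟩
      have hA' : ∃ j, ¬ A j := ⟨hA.choose, hA.choose_spec.1⟩
      have hklt : Nat.find hA' < Nat.find hB :=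
        lt_of_le_of_lt (Nat.find_min' hA' hA.choose_spec.1) hA.choose_spec.2
      exact ⟨Nat.find hA', ⟨Nat.find_spec hA', hpre _ hklt⟩,
        fun j hj => hpre j (hj.trans hklt)⟩
  · rintro h ⟨i, hBi, hAi⟩
    rcases h with h | ⟨k, ⟨hAk, hBk⟩, hpre⟩
    · exact h i hBi
    · rcases lt_trichotomy i k with hik | hik | hik
      · exact hpre i hik hBi
      · exact hBk (hik ▸ hBi)
      · exact hAk (hAi k hik)

theorem until_iff {A B : ℕ → Prop} :
    (∃ i, B i ∧ ∀ j < i, A j) ↔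
      ¬ ((∀ i, ¬ B i) ∨ (∃ i, (¬ A i ∧ ¬ B i) ∧ ∀ j < i, ¬ B j)) := by
  rw [← release_iff, not_not]

theorem sat_verum [Inhabited AP] (t : Trace AP) : TForm.sat t TForm.verum := by
  show _ ∨ _
  exact Classical.em _

theorem teamSat_verum [Inhabited AP] (T : Set (Trace AP)) :
    TForm.teamSat T TForm.verum := by
  refine ⟨{t ∈ T | (default : AP) ∈ t 0}, {t ∈ T | (default : AP) ∉ t 0}, ?_, ?_, ?_⟩
  · ext t; by_cases h : (default : AP) ∈ t 0 <;> simp [h]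
  · exact fun t ht => ht.2
  · exact fun t ht => ht.2

theorem dual_isLTL [Inhabited AP] (β : TForm AP) (h : β.isLTL) : β.dual.isLTL := by
  induction β with
  | pos p => trivial
  | neg p => trivial
  | and φ ψ ihφ ihψ => exact ⟨ihφ h.1, ihψ h.2⟩
  | or φ ψ ihφ ihψ => exact ⟨ihφ h.1, ihψ h.2⟩
  | boolOr φ ψ ihφ ihψ => exact h.elim
  | bNeg φ ih => exact h.elim
  | next φ ih => exact ih h
  | glob φ ih => exact ⟨⟨trivial, trivial⟩, ih h⟩
  | untl φ ψ ihφ ihψ => exact ⟨ihψ h.2, ihψ h.2, ihφ h.1, ihψ h.2⟩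

theorem sat_dual [Inhabited AP] (β : TForm AP) (h : β.isLTL) :
    ∀ t : Trace AP, TForm.sat t β.dual ↔ ¬ TForm.sat t β := by
  induction β with
  | pos p => intro t; simp [TForm.dual, TForm.sat]
  | neg p => intro t; simp [TForm.dual, TForm.sat]
  | and φ ψ ihφ ihψ =>
      intro t
      simp only [TForm.dual, TForm.sat, ihφ h.1, ihψ h.2, not_and_or]
  | or φ ψ ihφ ihψ =>
      intro t
      simp only [TForm.dual, TForm.sat, ihφ h.1, ihψ h.2, not_or]
  | boolOr φ ψ ihφ ihψ => exact h.elim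
  | bNeg φ ih => exact h.elim
  | next φ ih =>
      intro t
      simp only [TForm.dual, TForm.sat, ih h]
  | glob φ ih =>
      intro t
      simp only [TForm.dual, TForm.sat, ih h]
      constructor
      · rintro ⟨i, hi, -⟩ hall; exact hi (hall i)
      · intro hn
        push_neg at hn
        obtain ⟨i, hi⟩ := hn
        exact ⟨i, hi, fun j _ => sat_verum _⟩
  | untl φ ψ ihφ ihψ =>
      intro t
      simp only [TForm.dual, TForm.sat, ihφ h.1, ihψ h.2]
      rw [release_iff (A := fun j => TForm.sat (t.shift j) φ) (B := fun i => TForm.sat (t.shift i) ψ)]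

theorem isGreatest_singleton_iff {a b : ℕ} : IsGreatest ({a} : Set ℕ) b ↔ b = a := by
  constructor
  · rintro ⟨h, -⟩; exact h
  · rintro rfl; exact isGreatest_singleton

/-- Flatness of LTL formulas under lax team semantics. -/
theorem flat [Inhabited AP] (β : TForm AP) (h : β.isLTL) :
    ∀ T : Set (Trace AP), TForm.teamSat T β ↔ ∀ t ∈ T, TForm.sat t β := by
  classical
  induction β with
  | pos p => intro T; rfl
  | neg p => intro T; rfl
  | and φ ψ ihφ ihψ =>
      intro T
      simp only [TForm.teamSat, TForm.sat, ihφ h.1, ihψ h.2]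
      exact ⟨fun ⟨h1, h2⟩ t ht => ⟨h1 t ht, h2 t ht⟩,
        fun hh => ⟨fun t ht => (hh t ht).1, fun t ht => (hh t ht).2⟩⟩
  | or φ ψ ihφ ihψ =>
      intro T
      simp only [TForm.teamSat, TForm.sat, ihφ h.1, ihψ h.2]
      constructor
      · rintro ⟨T₁, T₂, rfl, h1, h2⟩ t ht
        rcases ht with ht | ht
        · exact Or.inl (h1 t ht)
        · exact Or.inr (h2 t ht)
      · intro hh
        refine ⟨{t ∈ T | TForm.sat t φ}, {t ∈ T | TForm.sat t ψ}, ?_, fun t ht => ht.2,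
          fun t ht => ht.2⟩
        ext t
        constructor
        · rintro (ht | ht) <;> exact ht.1
        · intro ht
          rcases hh t ht with hs | hs
          · exact Or.inl ⟨ht, hs⟩
          · exact Or.inr ⟨ht, hs⟩
  | boolOr φ ψ ihφ ihψ => exact h.elim
  | bNeg φ ih => exact h.elim
  | next φ ih =>
      intro T
      simp only [TForm.teamSat, TForm.sat, ih h]
      constructor
      · intro hh t ht
        exact hh _ ⟨t, ht, 1, rfl, rfl⟩
      · rintro hh s ⟨t, ht, i, hi, rfl⟩
        rcases hi with rfl
        exact hh t ht
  | glob φ ih =>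
      intro T
      simp only [TForm.teamSat, TForm.sat, ih h]
      constructor
      · intro hh t ht i
        exact hh (fun _ => Set.univ) (fun t _ => ⟨0, trivial⟩) _
          ⟨t, ht, i, trivial, rfl⟩
      · rintro hh f hf s ⟨t, ht, i, hi, rfl⟩
        exact hh t ht i
  | untl φ ψ ihφ ihψ =>
      intro T
      simp only [TForm.teamSat, TForm.sat, ihφ h.1, ihψ h.2]
      constructor
      · rintro ⟨f, hgood, hψ, hcond⟩ t ht
        have hkmem : sInf (f t) ∈ f t := Nat.sInf_mem (hgood t ht)
        refine ⟨sInf (f t), hψ _ ⟨t, ht, sInf (f t), hkmem, rfl⟩, ?_⟩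
        intro j hj
        have htT' : t ∈ {t ∈ T | ¬ IsGreatest (f t) 0} := by
          refine ⟨ht, fun hg => ?_⟩
          have : sInf (f t) ≤ 0 := Nat.sInf_le hg.1
          omega
        set T' := {t ∈ T | ¬ IsGreatest (f t) 0} with hT'
        set f' : Trace AP → Set ℕ :=
          fun t' => {j | ∀ m, IsGreatest (f t') m → j < m} with hf'
        have hzero : ∀ t' ∈ T', 0 ∈ f' t' := by
          rintro t' ⟨_, hng⟩ m hm
          rcases Nat.eq_zero_or_pos m with rfl | hmp
          · exact absurd hm hng
          · exact hmp
        have hgood' : goodF T' f' := fun t' ht' => ⟨0, hzero t' ht'⟩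
        have hlt : fLT T' f' f := by
          intro t' ht'
          constructor
          · calc sInf (f' t') ≤ 0 := Nat.sInf_le (hzero t' ht')
              _ ≤ sInf (f t') := Nat.zero_le _
          · intro mm hm
            have hmpos : 0 < mm := by
              rcases Nat.eq_zero_or_pos mm with rfl | hmp
              · exact absurd hm ht'.2
              · exact hmp
            refine ⟨mm - 1, ⟨?_, ?_⟩, by omega⟩
            · intro m' hm'
              have : m' = mm := IsGreatest.unique hm' hm
              omega
            · intro jj hjmem
              have := hjmem mm hm
              omega
        rcases hcond f' hgood' hlt with hemp | hsat
        · exact absurd hemp (Set.nonempty_iff_ne_empty.1 ⟨t, htT'⟩)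
        · refine hsat _ ⟨t, htT', j, ?_, rfl⟩
          intro m hm
          have : sInf (f t) ≤ m := hm.2 hkmem
          omega
      · intro hh
        have hch : ∀ t : Trace AP, ∃ i : ℕ, t ∈ T →
            TForm.sat (t.shift i) ψ ∧ ∀ j < i, TForm.sat (t.shift j) φ := by
          intro t
          by_cases ht : t ∈ T
          · obtain ⟨i, hi⟩ := hh t ht
            exact ⟨i, fun _ => hi⟩
          · exact ⟨0, fun h' => absurd h' ht⟩
        choose g hg using hch
        refine ⟨fun t => {g t}, fun t _ => ⟨g t, rfl⟩, ?_, ?_⟩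
        · rintro s ⟨t, ht, i, hi, rfl⟩
          rcases hi with rfl
          exact (hg t ht).1
        · intro f' hgood' hlt'
          by_cases hT' : {t ∈ T | ¬ IsGreatest (({g t} : Set ℕ)) 0} = (∅ : Set (Trace AP))
          · exact Or.inl hT'
          · right
            rintro s ⟨t, ⟨htT, htg⟩, i, hi, rfl⟩
            obtain ⟨-, hm⟩ := hlt' t ⟨htT, htg⟩
            obtain ⟨m', hm', hm'lt⟩ := hm (g t) isGreatest_singleton
            have : i ≤ m' := hm'.2 hi
            exact (hg t htT).2 i (by omega)

theorem teamSat_tExists [Inhabited AP] (β : TForm AP) (h : β.isLTL)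
    (T : Set (Trace AP)) :
    TForm.teamSat T β.tExists ↔ ∃ t ∈ T, TForm.sat t β := by
  show ¬ TForm.teamSat T β.dual ↔ _
  rw [flat β.dual (dual_isLTL β h)]
  push_neg
  constructor
  · rintro ⟨t, ht, hs⟩
    exact ⟨t, ht, not_not.1 fun hc => hs ((sat_dual β h t).2 hc)⟩
  · rintro ⟨t, ht, hs⟩
    exact ⟨t, ht, fun hc => ((sat_dual β h t).1 hc) hs⟩

theorem deH_isLTL [Inhabited AP] :
    ∀ φ : HForm AP V, (deH φ).isLTL ∧ (deHn φ).isLTL := by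
  intro φ
  induction φ with
  | atom a v => exact ⟨trivial, trivial⟩
  | hnot φ ih => exact ⟨ih.2, ih.1⟩
  | hand φ ψ ihφ ihψ => exact ⟨⟨ihφ.1, ihψ.1⟩, ⟨ihφ.2, ihψ.2⟩⟩
  | hor φ ψ ihφ ihψ => exact ⟨⟨ihφ.1, ihψ.1⟩, ⟨ihφ.2, ihψ.2⟩⟩
  | hnext φ ih => exact ⟨ih.1, ih.2⟩
  | hglob φ ih => exact ⟨ih.1, ⟨⟨trivial, trivial⟩, ih.2⟩⟩
  | huntl φ ψ ihφ ihψ =>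
      exact ⟨⟨ihφ.1, ihψ.1⟩, ⟨ihψ.2, ihψ.2, ihφ.2, ihψ.2⟩⟩
  | hall v φ ih => exact ih
  | hex v φ ih => exact ih

theorem deH_sat [Inhabited AP] [DecidableEq V] (π : V) (T : Set (Trace AP)) :
    ∀ φ : HForm AP V, φ.QFree → φ.free ⊆ {π} → ∀ A : V → Trace AP,
      (HForm.hsat A T φ ↔ TForm.sat (A π) (deH φ)) ∧
      (HForm.hsat A T φ ↔ ¬ TForm.sat (A π) (deHn φ)) := by
  intro φ
  induction φ with
  | atom a v =>
      intro _ hfree A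
      have hv : v = π := hfree rfl
      subst hv
      exact ⟨Iff.rfl, not_not.symm⟩
  | hnot φ ih =>
      intro hqf hfree A
      obtain ⟨h1, h2⟩ := ih hqf hfree A
      constructor
      · show ¬ _ ↔ _
        rw [h2, not_not]; rfl
      · show ¬ _ ↔ ¬ _
        rw [h1]; rfl
  | hand φ ψ ihφ ihψ =>
      intro hqf hfree A
      obtain ⟨h1, h2⟩ := ihφ hqf.1 (fun v hv => hfree (Or.inl hv)) A
      obtain ⟨g1, g2⟩ := ihψ hqf.2 (fun v hv => hfree (Or.inr hv)) A
      constructor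
      · show _ ∧ _ ↔ _ ∧ _
        rw [h1, g1]
      · show _ ∧ _ ↔ ¬ (_ ∨ _)
        rw [not_or, h2, g2]
  | hor φ ψ ihφ ihψ =>
      intro hqf hfree A
      obtain ⟨h1, h2⟩ := ihφ hqf.1 (fun v hv => hfree (Or.inl hv)) A
      obtain ⟨g1, g2⟩ := ihψ hqf.2 (fun v hv => hfree (Or.inr hv)) A
      constructor
      · show _ ∨ _ ↔ _ ∨ _
        rw [h1, g1]
      · show _ ∨ _ ↔ ¬ (_ ∧ _)
        rw [not_and_or, h2, g2]
  | hnext φ ih =>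
      intro hqf hfree A
      exact ih hqf hfree (shiftA A 1)
  | hglob φ ih =>
      intro hqf hfree A
      constructor
      · show (∀ i, _) ↔ ∀ i, _
        exact forall_congr' fun i => (ih hqf hfree (shiftA A i)).1
      · show (∀ i, _) ↔ ¬ ∃ i, _ ∧ _
        rw [not_exists]
        refine forall_congr' fun i => ?_
        rw [(ih hqf hfree (shiftA A i)).2]
        exact ⟨fun hn hc => hn hc.1, fun hn hs => hn ⟨hs, fun j _ => sat_verum _⟩⟩
  | huntl φ ψ ihφ ihψ =>
      intro hqf hfree A
      have hφ1 := fun i => (ihφ hqf.1 (fun v hv => hfree (Or.inl hv)) (shiftA A i)).1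
      have hψ1 := fun i => (ihψ hqf.2 (fun v hv => hfree (Or.inr hv)) (shiftA A i)).1
      have hφ2 : ∀ i, ¬ HForm.hsat (shiftA A i) T φ ↔ TForm.sat (shiftA A i π) (deHn φ) :=
        fun i => by
          rw [(ihφ hqf.1 (fun v hv => hfree (Or.inl hv)) (shiftA A i)).2, not_not]
      have hψ2 : ∀ i, ¬ HForm.hsat (shiftA A i) T ψ ↔ TForm.sat (shiftA A i π) (deHn ψ) :=
        fun i => by
          rw [(ihψ hqf.2 (fun v hv => hfree (Or.inr hv)) (shiftA A i)).2, not_not]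
      constructor
      · show (∃ i, _ ∧ ∀ j < i, _) ↔ ∃ i, _ ∧ ∀ j < i, _
        exact exists_congr fun i => and_congr (hψ1 i)
          (forall_congr' fun j => imp_congr Iff.rfl (hφ1 j))
      · show (∃ i, _ ∧ ∀ j < i, _) ↔ ¬ (_ ∨ _)
        rw [until_iff (A := fun j => HForm.hsat (shiftA A j) T φ)
          (B := fun i => HForm.hsat (shiftA A i) T ψ)]
        refine not_congr (or_congr (forall_congr' fun i => hψ2 i)
          (exists_congr fun i => and_congr (and_congr (hφ2 i) (hψ2 i))
            (forall_congr' fun j => imp_congr Iff.rfl (hψ2 j))))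
  | hall v φ ih => intro hqf; exact hqf.elim
  | hex v φ ih => intro hqf; exact hqf.elim

theorem hsat_foldr_hor [DecidableEq V] (A : V → Trace AP) (T : Set (Trace AP))
    (l : List (HForm AP V)) (b : HForm AP V) :
    HForm.hsat A T (l.foldr .hor b) ↔
      HForm.hsat A T b ∨ ∃ x ∈ l, HForm.hsat A T x := by
  induction l with
  | nil => simp
  | cons x l ih =>
      show _ ∨ _ ↔ _
      rw [ih]
      simp only [List.mem_cons]
      constructor
      · rintro (h | (h | ⟨y, hy, h⟩))
        · exact Or.inr ⟨x, Or.inl rfl, h⟩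
        · exact Or.inl h
        · exact Or.inr ⟨y, Or.inr hy, h⟩
      · rintro (h | ⟨y, (rfl | hy), h⟩)
        · exact Or.inr (Or.inl h)
        · exact Or.inl h
        · exact Or.inr (Or.inr ⟨y, hy, h⟩)

theorem hsat_foldr_hand [DecidableEq V] (A : V → Trace AP) (T : Set (Trace AP))
    (l : List (HForm AP V)) (b : HForm AP V) :
    HForm.hsat A T (l.foldr .hand b) ↔
      HForm.hsat A T b ∧ ∀ x ∈ l, HForm.hsat A T x := by
  induction l with
  | nil => simp
  | cons x l ih =>
      show _ ∧ _ ↔ _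
      rw [ih]
      simp only [List.mem_cons]
      constructor
      · rintro ⟨hx, hb, hl⟩
        exact ⟨hb, fun y hy => by rcases hy with rfl | hy; exacts [hx, hl y hy]⟩
      · rintro ⟨hb, hl⟩
        exact ⟨hl x (Or.inl rfl), hb, fun y hy => hl y (Or.inr hy)⟩

theorem teamSat_foldr_boolOr (T : Set (Trace AP))
    (l : List (TForm AP)) (b : TForm AP) :
    TForm.teamSat T (l.foldr .boolOr b) ↔
      TForm.teamSat T b ∨ ∃ x ∈ l, TForm.teamSat T x := by
  induction l with
  | nil => simp
  | cons x l ih =>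
      show _ ∨ _ ↔ _
      rw [ih]
      simp only [List.mem_cons]
      constructor
      · rintro (h | (h | ⟨y, hy, h⟩))
        · exact Or.inr ⟨x, Or.inl rfl, h⟩
        · exact Or.inl h
        · exact Or.inr ⟨y, Or.inr hy, h⟩
      · rintro (h | ⟨y, (rfl | hy), h⟩)
        · exact Or.inr (Or.inl h)
        · exact Or.inl h
        · exact Or.inr (Or.inr ⟨y, hy, h⟩)

theorem teamSat_foldr_and (T : Set (Trace AP))
    (l : List (TForm AP)) (b : TForm AP) :
    TForm.teamSat T (l.foldr .and b) ↔
      TForm.teamSat T b ∧ ∀ x ∈ l, TForm.teamSat T x := by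
  induction l with
  | nil => simp
  | cons x l ih =>
      show _ ∧ _ ↔ _
      rw [ih]
      simp only [List.mem_cons]
      constructor
      · rintro ⟨hx, hb, hl⟩
        exact ⟨hb, fun y hy => by rcases hy with rfl | hy; exacts [hx, hl y hy]⟩
      · rintro ⟨hb, hl⟩
        exact ⟨hl x (Or.inl rfl), hb, fun y hy => hl y (Or.inr hy)⟩

theorem hsat_bigOrF [DecidableEq V] {m : ℕ} (A : V → Trace AP) (T : Set (Trace AP))
    (f : Fin (m + 1) → HForm AP V) :
    HForm.hsat A T (HForm.bigOrF f) ↔ ∃ i, HForm.hsat A T (f i) := by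
  rw [HForm.bigOrF, hsat_foldr_hor, Fin.exists_fin_succ]
  simp only [List.mem_ofFn]
  constructor
  · rintro (h | ⟨x, ⟨i, rfl⟩, h⟩)
    · exact Or.inl h
    · exact Or.inr ⟨i, h⟩
  · rintro (h | ⟨i, h⟩)
    · exact Or.inl h
    · exact Or.inr ⟨f i.succ, ⟨i, rfl⟩, h⟩

theorem hsat_bigAndF [DecidableEq V] {m : ℕ} (A : V → Trace AP) (T : Set (Trace AP))
    (f : Fin (m + 1) → HForm AP V) :
    HForm.hsat A T (HForm.bigAndF f) ↔ ∀ i, HForm.hsat A T (f i) := by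
  rw [HForm.bigAndF, hsat_foldr_hand, Fin.forall_fin_succ]
  simp only [List.mem_ofFn]
  constructor
  · rintro ⟨h0, h⟩
    exact ⟨h0, fun i => h _ ⟨i, rfl⟩⟩
  · rintro ⟨h0, h⟩
    exact ⟨h0, by rintro x ⟨i, rfl⟩; exact h i⟩

theorem teamSat_bigBoolOrF {m : ℕ} (T : Set (Trace AP))
    (f : Fin (m + 1) → TForm AP) :
    TForm.teamSat T (TForm.bigBoolOrF f) ↔ ∃ i, TForm.teamSat T (f i) := by
  rw [TForm.bigBoolOrF, teamSat_foldr_boolOr, Fin.exists_fin_succ]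
  simp only [List.mem_ofFn]
  constructor
  · rintro (h | ⟨x, ⟨i, rfl⟩, h⟩)
    · exact Or.inl h
    · exact Or.inr ⟨i, h⟩
  · rintro (h | ⟨i, h⟩)
    · exact Or.inl h
    · exact Or.inr ⟨f i.succ, ⟨i, rfl⟩, h⟩

theorem teamSat_bigAndF {m : ℕ} (T : Set (Trace AP))
    (f : Fin (m + 1) → TForm AP) :
    TForm.teamSat T (TForm.bigAndF f) ↔ ∀ i, TForm.teamSat T (f i) := by
  rw [TForm.bigAndF, teamSat_foldr_and, Fin.forall_fin_succ]
  simp only [List.mem_ofFn]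
  constructor
  · rintro ⟨h0, h⟩
    exact ⟨h0, fun i => h _ ⟨i, rfl⟩⟩
  · rintro ⟨h0, h⟩
    exact ⟨h0, by rintro x ⟨i, rfl⟩; exact h i⟩

end Aux

/-- BC(one-variable HyperLTL) ≤ left-dc-TeamLTL(∼):
`⋁ᵢ ⋀ⱼ Qᵢⱼπ.φᵢⱼ(π)` (with `q i j = true` meaning ∀ and `false` meaning ∃) is
equivalent to `⊕ᵢ (αᵢ ∧ ⋀ⱼ ∃φᵢⱼ)`, where `αᵢ` is the conjunction of the
universally quantified matrices of disjunct `i` (skipped positions padded with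
⊤) and the ∃-conjuncts correspond to the existentially quantified ones. -/
theorem bc_one_var_hyperLTL_le_left_dc_teamLTL {AP V : Type} [Inhabited AP]
    [DecidableEq V] (m n : ℕ) (π : V)
    (φ : Fin (m + 1) → Fin (n + 1) → HForm AP V)
    (q : Fin (m + 1) → Fin (n + 1) → Bool)
    (hqf : ∀ i j, (φ i j).QFree)
    (hfree : ∀ i j, (φ i j).free ⊆ {π})
    (T : Set (Trace AP)) (A : V → Trace AP) :
    HForm.hsat A T
        (HForm.bigOrF fun i => HForm.bigAndF fun j =>
          if q i j then .hall π (φ i j) else .hex π (φ i j)) ↔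
      TForm.teamSat T
        (TForm.bigBoolOrF fun i =>
          .and (TForm.bigAndF fun j =>
                  if q i j then deH (φ i j) else TForm.verum)
               (TForm.bigAndF fun j =>
                  if q i j then TForm.verum else (deH (φ i j)).tExists)) := by
  classical
  rw [hsat_bigOrF, teamSat_bigBoolOrF]
  refine exists_congr fun i => ?_
  rw [hsat_bigAndF]
  show _ ↔ _ ∧ _
  rw [teamSat_bigAndF, teamSat_bigAndF, ← forall_and]
  refine forall_congr' fun j => ?_
  by_cases hq : q i j
  · simp only [hq, if_true]
    constructor
    · intro h
      refine ⟨?_, teamSat_verum T⟩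
      rw [flat _ (deH_isLTL (φ i j)).1]
      intro t ht
      have := (deH_sat π T (φ i j) (hqf i j) (hfree i j) (Function.update A π t)).1.mp
        (h t ht)
      rwa [Function.update_self] at this
    · rintro ⟨h, -⟩ t ht
      rw [flat _ (deH_isLTL (φ i j)).1] at h
      have := h t ht
      refine (deH_sat π T (φ i j) (hqf i j) (hfree i j) (Function.update A π t)).1.mpr ?_
      rwa [Function.update_self]
  · simp only [hq, Bool.false_eq_true, if_false]
    rw [teamSat_tExists _ (deH_isLTL (φ i j)).1]
    constructor
    · rintro ⟨t, ht, h⟩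
      refine ⟨teamSat_verum T, t, ht, ?_⟩
      have := (deH_sat π T (φ i j) (hqf i j) (hfree i j) (Function.update A π t)).1.mp h
      rwa [Function.update_self] at this
    · rintro ⟨-, t, ht, h⟩
      refine ⟨t, ht, (deH_sat π T (φ i j) (hqf i j) (hfree i j)
        (Function.update A π t)).1.mpr ?_⟩
      rwa [Function.update_self]
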